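/- For any θ ∈ (0, π/2) and q ∈ (0,1), sin(θ + qπ/2) ≥ (sin θ)^(1-q) · (cos θ)^q. -/

import Mathlib

/-! Rotating by `qπ/2` gives `sin (θ + qπ/2) = sin θ cos (qπ/2) + cos θ sin (qπ/2)`, and Jordan's
inequality bounds `sin (qπ/2) ≥ q`, `cos (qπ/2) ≥ 1 - q`. So `sin (θ + qπ/2)` dominates the
arithmetic mean `(1 - q) sin θ + q cos θ`, which dominates the weighted geometric mean
`(sin θ)^(1-q) (cos θ)^q`. -/

open Real

namespace Real

lemma le_sin_mul_pi_div_two {x : ℝ} (hx₀ : 0 ≤ x) (hx₁ : x ≤ 1) : x ≤ sin (x * π / 2) := by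
  have h := mul_le_sin (x := x * π / 2) (by positivity) (by nlinarith [pi_pos])
  rwa [show 2 / π * (x * π / 2) = x by field_simp] at h

lemma one_sub_le_cos_mul_pi_div_two {x : ℝ} (hx₀ : 0 ≤ x) (hx₁ : x ≤ 1) :
    1 - x ≤ cos (x * π / 2) := by
  have h := one_sub_mul_le_cos (x := x * π / 2) (by positivity) (by nlinarith [pi_pos])
  rwa [show 2 / π * (x * π / 2) = x by field_simp] at h

lemma one_sub_mul_sin_add_mul_cos_le_sin_add {θ q : ℝ} (hs : 0 ≤ sin θ) (hc : 0 ≤ cos θ)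
    (hq₀ : 0 ≤ q) (hq₁ : q ≤ 1) :
    (1 - q) * sin θ + q * cos θ ≤ sin (θ + q * π / 2) := by
  rw [sin_add, mul_comm (1 - q), mul_comm q]
  exact add_le_add (mul_le_mul_of_nonneg_left (one_sub_le_cos_mul_pi_div_two hq₀ hq₁) hs)
    (mul_le_mul_of_nonneg_left (le_sin_mul_pi_div_two hq₀ hq₁) hc)

end Real

theorem stmt_1 (θ q : ℝ) (hθ0 : 0 < θ) (hθ1 : θ < π / 2) (hq0 : 0 < q) (hq1 : q < 1) :
    Real.sin (θ + q * π / 2) ≥ (Real.sin θ) ^ (1 - q) * (Real.cos θ) ^ q := by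
  have hs : 0 ≤ sin θ := sin_nonneg_of_nonneg_of_le_pi hθ0.le (by linarith [pi_pos])
  have hc : 0 ≤ cos θ := cos_nonneg_of_mem_Icc ⟨by linarith, hθ1.le⟩
  calc (sin θ) ^ (1 - q) * (cos θ) ^ q ≤ (1 - q) * sin θ + q * cos θ :=
        geom_mean_le_arith_mean2_weighted (by linarith) hq0.le hs hc (by ring)
    _ ≤ sin (θ + q * π / 2) := one_sub_mul_sin_add_mul_cos_le_sin_add hs hc hq0.le hq1.le
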